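/- Let 𝒜 be a finite set of alternatives and let V be a finite set of valuations v : 𝒜 → ℝ, with a total order ≻ᵛ on V and a total order ≻ᵃ on 𝒜. If V is single-crossing with respect to ≻ᵛ and ≻ᵃ, then every function f : V → 𝒜 that is monotone with respect to ≻ᵛ and ≻ᵃ is implementable. -/

import Mathlib

/-!
Charge each type the payment that makes it exactly indifferent to the allocation of the type just
below it. Single crossing then lets these adjacent constraints telescope: comparing a type `v` with
a higher type `v'` along the chain of successors between them, each step of the chain gains `v` at
most what it costs and gains `v'` at least what it costs, which is incentive compatibility in both
directions.
-/

open Order Finset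

def SingleCrossing {V A : Type*} [Preorder V] [Preorder A] (val : V → A → ℝ) : Prop :=
  ∀ ⦃v v' : V⦄, v ≤ v' → ∀ ⦃a a' : A⦄, a ≤ a' → val v a' - val v a ≤ val v' a' - val v' a

theorem singleCrossing_of_forall_lt {V A : Type*} [PartialOrder V] [PartialOrder A]
    {val : V → A → ℝ}
    (h : ∀ v v' : V, v < v' → ∀ a a' : A, a < a' → val v a' - val v a ≤ val v' a' - val v' a) :
    SingleCrossing val := by
  intro v v' hv a a' ha
  rcases hv.lt_or_eq with hv | rfl
  · rcases ha.lt_or_eq with ha | rfl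
    · exact h v v' hv a a' ha
    · simp
  · exact le_rfl

theorem exists_succ_sub_eq {V M : Type*} [LinearOrder V] [Fintype V] [SuccOrder V]
    [AddCommGroup M] (g : V → M) (hg : ∀ u, IsMax u → g u = 0) :
    ∃ P : V → M, ∀ u, P (succ u) - P u = g u := by
  classical
  refine ⟨fun v ↦ ∑ u ∈ univ.filter (· < v), g u, fun u ↦ ?_⟩
  by_cases hu : IsMax u
  · simp [hu.succ_eq, hg u hu]
  · have hlt : univ.filter (· < succ u) = insert u (univ.filter (· < u)) := by
      ext x
      simp [lt_succ_iff_of_not_isMax hu, le_iff_lt_or_eq, or_comm]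
    dsimp only
    rw [hlt, sum_insert (by simp)]
    abel

section Telescoping

variable {V A : Type*} [LinearOrder V] [SuccOrder V] [IsSuccArchimedean V] [Preorder A]
  {val : V → A → ℝ} {f : V → A} {P : V → ℝ}

theorem utility_sub_le_payment_sub (hsc : SingleCrossing val) (hf : Monotone f)
    (hP : ∀ u, P (succ u) - P u = val (succ u) (f (succ u)) - val (succ u) (f u))
    {v v' : V} (h : v ≤ v') : val v (f v') - val v (f v) ≤ P v' - P v := by
  induction h using Succ.rec with
  | rfl => simp
  | succ u hvu ih =>
    have step := hsc (hvu.trans (le_succ u)) (hf (le_succ u))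
    linarith [hP u]

theorem payment_sub_le_utility_sub (hsc : SingleCrossing val) (hf : Monotone f)
    (hP : ∀ u, P (succ u) - P u = val (succ u) (f (succ u)) - val (succ u) (f u))
    {v v' : V} (h : v ≤ v') : P v' - P v ≤ val v' (f v') - val v' (f v) := by
  induction h using Succ.rec with
  | rfl => simp
  | succ u hvu ih =>
    have step := hsc (le_succ u) (hf hvu)
    linarith [hP u]

end Telescoping

theorem monotone_implementable_of_single_crossing
    {A V : Type*} [Fintype V] [LinearOrder A] [LinearOrder V]
    (val : V → A → ℝ)
    (hsc : ∀ v v' : V, v < v' → ∀ a a' : A, a < a' →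
      val v a' - val v a ≤ val v' a' - val v' a)
    (f : V → A)
    (hmono : ∀ v v' : V, v < v' → f v ≤ f v') :
    ∃ P : V → ℝ, ∀ v v' : V, val v (f v') - P v' ≤ val v (f v) - P v := by
  let _ := Fintype.toLocallyFiniteOrder (α := V)
  let _ := LinearLocallyFiniteOrder.succOrder V
  have hsc' : SingleCrossing val := singleCrossing_of_forall_lt hsc
  have hf : Monotone f := monotone_iff_forall_lt.2 hmono
  obtain ⟨P, hP⟩ := exists_succ_sub_eq (fun u ↦ val (succ u) (f (succ u)) - val (succ u) (f u))
    (fun u hu ↦ by simp [hu.succ_eq])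
  refine ⟨P, fun v v' ↦ ?_⟩
  rcases le_total v v' with h | h
  · linarith [utility_sub_le_payment_sub hsc' hf hP h]
  · linarith [payment_sub_le_utility_sub hsc' hf hP h]
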